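/- arXiv:1812.06538 — 3 statements merged into one kernel-verified Lean document; each statement's English description precedes it below -/
import Mathlib

section
/- For positive integers k, d with d | k and nonzero t, the Harer–Zagier polynomial β_{k,d}(t) := Σ_{r=1}^{k-1} e^{2πir/d} t^{k - gcd(k,r)} satisfies β_{k,d}(t) = k·t^k·M(1/t; k/d, k) − 1, where M(t; n, k) := (1/k) Σ_{d'|k} c(n, k/d') t^{d'} and c(n,m) is the Ramanujan sum. -/
open Finset

/-- Ramanujan sum. -/
noncomputable def ramc (n k : ℕ) : ℂ :=
  ∑ m ∈ (Finset.Icc 1 k).filter (fun m => Nat.gcd m k = 1),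
    Complex.exp (2 * Real.pi * Complex.I * m * n / k)

/-- The `n`-necklace polynomial `M(t;n,k) = (1/k) Σ_{d|k} c(n,k/d) t^d`. -/
noncomputable def neck (t : ℂ) (n k : ℕ) : ℂ :=
  (1 / (k : ℂ)) * ∑ d ∈ k.divisors, ramc n (k / d) * t ^ d

/-- Harer–Zagier polynomial `β_{k,d}(t) = Σ_{r=1}^{k-1} e^{2πir/d} t^{k-gcd(k,r)}`. -/
noncomputable def hz (k d : ℕ) (t : ℂ) : ℂ :=
  ∑ r ∈ Finset.Icc 1 (k - 1),
    Complex.exp (2 * Real.pi * Complex.I * r / d) * t ^ (k - Nat.gcd k r)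

/-!
Complete `β_{k,d}(t)` by the term `r = k`, which is `1` because `d ∣ k`, and group the terms
according to `g = gcd(k, r)`. The `r` with `gcd(k, r) = g` are `r = g s` with `1 ≤ s ≤ k/g`
coprime to `k/g`, and `e^{2πi g s/d} = e^{2πi s (k/d)/(k/g)}`, so the fibre of `g` contributes
`c(k/d, k/g) t^{k-g}`: these are the terms of `k t^k M(1/t; k/d, k)`.
-/

open Complex

theorem exp_two_pi_mul_I_mul_div_eq_one_of_dvd {m d : ℕ} (hd : d ∣ m) :
    exp (2 * Real.pi * I * m / d) = 1 := by
  obtain ⟨q, rfl⟩ := hd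
  rcases eq_or_ne d 0 with rfl | hd0
  · simp
  rw [exp_eq_one_iff]
  exact ⟨q, by push_cast; field_simp⟩

theorem sum_filter_gcd_eq_sum_coprime {M : Type*} [AddCommMonoid M] {k g : ℕ} (hg : g ∣ k)
    (f : ℕ → M) :
    ∑ r ∈ (Icc 1 k).filter (fun r => Nat.gcd k r = g), f r =
      ∑ s ∈ (Icc 1 (k / g)).filter (fun s => Nat.gcd s (k / g) = 1), f (g * s) := by
  obtain ⟨q, rfl⟩ := hg
  rcases Nat.eq_zero_or_pos g with rfl | hg0
  · simp
  have hdvd {r} (hr : Nat.gcd (g * q) r = g) : g ∣ r := hr ▸ Nat.gcd_dvd_right _ r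
  simp only [Nat.mul_div_cancel_left q hg0]
  refine sum_nbij' (· / g) (g * ·) ?_ ?_ ?_ ?_ ?_
  · intro r hr
    simp only [mem_filter, mem_Icc] at hr ⊢
    obtain ⟨⟨hr1, hrk⟩, hgcd⟩ := hr
    obtain ⟨s, rfl⟩ := hdvd hgcd
    rw [Nat.gcd_mul_left, Nat.mul_eq_left hg0.ne', Nat.gcd_comm] at hgcd
    rw [Nat.mul_div_cancel_left s hg0]
    exact ⟨⟨pos_of_mul_pos_right hr1 g.zero_le, Nat.le_of_mul_le_mul_left hrk hg0⟩, hgcd⟩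
  · intro s hs
    simp only [mem_filter, mem_Icc, Nat.gcd_mul_left] at hs ⊢
    obtain ⟨⟨hs1, hsq⟩, hcop⟩ := hs
    refine ⟨⟨Nat.mul_pos hg0 hs1, Nat.mul_le_mul_left g hsq⟩, ?_⟩
    rw [Nat.gcd_comm, hcop, mul_one]
  · intro r hr
    exact Nat.mul_div_cancel' (hdvd (mem_filter.mp hr).2)
  · intro s _
    exact Nat.mul_div_cancel_left s hg0
  · intro r hr
    rw [Nat.mul_div_cancel' (hdvd (mem_filter.mp hr).2)]

theorem ramc_div_div_eq_sum_gcd_eq {k d g : ℕ} (hd : d ∣ k) (hg : g ∣ k) :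
    ramc (k / d) (k / g) =
      ∑ r ∈ (Icc 1 k).filter (fun r => Nat.gcd k r = g), exp (2 * Real.pi * I * r / d) := by
  rcases Nat.eq_zero_or_pos k with rfl | hk
  · simp [ramc]
  rw [sum_filter_gcd_eq_sum_coprime hg, ramc]
  refine sum_congr rfl fun s _ => congrArg exp ?_
  have hd0 : (d : ℂ) ≠ 0 := by exact_mod_cast (Nat.pos_of_dvd_of_pos hd hk).ne'
  have hg0 : (g : ℂ) ≠ 0 := by exact_mod_cast (Nat.pos_of_dvd_of_pos hg hk).ne'
  have hk0 : (k : ℂ) ≠ 0 := by exact_mod_cast hk.ne'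
  push_cast [Nat.cast_div hd hd0, Nat.cast_div hg hg0]
  field_simp

theorem hz_add_one {k d : ℕ} (hk : 0 < k) (hd : d ∣ k) (t : ℂ) :
    hz k d t + 1 =
      ∑ r ∈ Icc 1 k, exp (2 * Real.pi * I * r / d) * t ^ (k - Nat.gcd k r) := by
  obtain ⟨n, rfl⟩ := Nat.exists_eq_add_one_of_ne_zero hk.ne'
  rw [sum_Icc_succ_top (by omega), hz, Nat.add_sub_cancel, Nat.gcd_self, Nat.sub_self, pow_zero,
    mul_one, exp_two_pi_mul_I_mul_div_eq_one_of_dvd hd]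

theorem natCast_mul_pow_mul_neck_inv {t : ℂ} (ht : t ≠ 0) (n k : ℕ) :
    (k : ℂ) * t ^ k * neck (1 / t) n k = ∑ g ∈ k.divisors, ramc n (k / g) * t ^ (k - g) := by
  rcases eq_or_ne k 0 with rfl | hk
  · simp
  have hkC : (k : ℂ) ≠ 0 := by exact_mod_cast hk
  rw [neck, mul_right_comm, ← mul_assoc, mul_one_div_cancel hkC, one_mul, sum_mul]
  refine sum_congr rfl fun g hg => ?_
  have htk : t ^ k = t ^ (k - g) * t ^ g := by
    rw [← pow_add, Nat.sub_add_cancel (Nat.divisor_le hg)]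
  rw [htk, one_div_pow]
  field_simp

theorem stmt1 (k d : ℕ) (hk : 0 < k) (hd : d ∣ k) (t : ℂ) (ht : t ≠ 0) :
    hz k d t = (k : ℂ) * t ^ k * neck (1 / t) (k / d) k - 1 := by
  have hgcd_mem : ∀ r ∈ Icc 1 k, Nat.gcd k r ∈ k.divisors := fun r _ =>
    Nat.mem_divisors.mpr ⟨Nat.gcd_dvd_left k r, hk.ne'⟩
  rw [natCast_mul_pow_mul_neck_inv ht, eq_sub_iff_add_eq, hz_add_one hk hd,
    ← sum_fiberwise_of_maps_to hgcd_mem]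
  refine sum_congr rfl fun g hg => ?_
  rw [ramc_div_div_eq_sum_gcd_eq hd (Nat.dvd_of_mem_divisors hg), sum_mul]
  exact sum_congr rfl fun r hr => by rw [(mem_filter.mp hr).2]
end

section
/- For positive integers n, k, the n-necklace polynomial satisfies M(t;n,k) = Z^{χ_n}_{R(C_k)}(t,...,t), where χ_n is the irreducible character of the cyclic group C_k sending a fixed generator to e^{2πin/k}, R(C_k) is the regular permutation representation of C_k, and Z^χ is the generalized cycle index with all variables set to t. -/
/-!
The cycles of the translation `x ↦ g * x` of a group are the cosets of `⟨g⟩`, so their number is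
the index of `⟨g⟩`; in `ℤ/k` the element `j` generates a subgroup of index `gcd(j, k)`. Grouping
`j ∈ [0, k)` by `d = gcd(j, k)` and writing `j = d a` with `a` a unit modulo `k / d` turns the
character sum into `Σ_{d ∣ k} c(n, k/d) t^d`.
-/

open Finset

/-- Total number of cycles of a permutation (orbits of its iteration, fixed points
counted as `1`-cycles). -/
noncomputable def totalCycles {α : Type*} (σ : Equiv.Perm α) : ℕ :=
  Set.ncard {S : Set α | ∃ x : α, S = Set.range fun z : ℤ => (σ ^ z) x}

theorem totalCycles_mulLeft {G : Type*} [Group G] (g : G) :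
    totalCycles (Equiv.mulLeft g) = (Subgroup.zpowers g).index := by
  have hcycle (x : G) : (Set.range fun z : ℤ => (Equiv.mulLeft g ^ z) x) =
      MulAction.orbit (Subgroup.zpowers g) x := by
    ext y
    simp [Equiv.zpow_mulLeft, MulAction.mem_orbit_iff, Subgroup.smul_def]
  have hcycles : {S : Set G | ∃ x : G, S = Set.range fun z : ℤ => (Equiv.mulLeft g ^ z) x} =
      Set.range (MulAction.orbitRel.Quotient.orbit (G := Subgroup.zpowers g) (α := G)) := by
    rw [← Quotient.mk''_surjective.range_comp]
    ext S
    simp only [Set.mem_ofPred_eq, hcycle, Set.mem_range, Function.comp_apply,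
      MulAction.orbitRel.Quotient.orbit_mk, eq_comm]
  rw [totalCycles, hcycles,
    Set.ncard_range_of_injective MulAction.orbitRel.Quotient.orbit_injective]
  -- orbits of `⟨g⟩` acting by left multiplication are the right cosets `⟨g⟩ x`
  exact Nat.card_congr (QuotientGroup.quotientRightRelEquivQuotientLeftRel _)

theorem ZMod.index_zpowers_ofAdd (k : ℕ) [NeZero k] (j : ZMod k) :
    (Subgroup.zpowers (Multiplicative.ofAdd j)).index = j.val.gcd k := by
  have hk := NeZero.ne k
  have hord : orderOf (Multiplicative.ofAdd j) = k / k.gcd j.val := by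
    rw [orderOf_ofAdd_eq_addOrderOf, ← ZMod.addOrderOf_coe _ hk, ZMod.natCast_zmod_val]
  have hmul := (Subgroup.zpowers (Multiplicative.ofAdd j)).index_mul_card
  rw [Nat.card_zpowers, Nat.card_eq_fintype_card, Fintype.card_multiplicative, ZMod.card] at hmul
  rw [Nat.eq_div_of_mul_eq_left (orderOf_pos _).ne' hmul, hord,
    Nat.div_div_self (Nat.gcd_dvd_left _ _) hk, Nat.gcd_comm]

theorem ZMod.sum_val_eq_sum_range {M : Type*} [AddCommMonoid M] (k : ℕ) [NeZero k]
    (f : ℕ → M) : ∑ x : ZMod k, f x.val = ∑ j ∈ range k, f j := by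
  obtain ⟨k, rfl⟩ := Nat.exists_eq_succ_of_ne_zero (NeZero.ne k)
  exact Fin.sum_univ_eq_sum_range f (k + 1)

theorem Finset.sum_Icc_one_eq_sum_range {M : Type*} [AddCommMonoid M] (f : ℕ → M) {m : ℕ}
    (h : f m = f 0) : ∑ a ∈ Icc 1 m, f a = ∑ a ∈ range m, f a := by
  rcases m with _ | m
  · simp
  rw [← Ico_add_one_right_eq_Icc, sum_Ico_eq_sum_range, Nat.add_sub_cancel, sum_range_succ,
    sum_range_succ', ← h]
  simp only [add_comm 1]

theorem ramc_eq_sum_range (n m : ℕ) :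
    ramc n m = ∑ a ∈ range m with a.gcd m = 1,
      Complex.exp (2 * Real.pi * Complex.I * a * n / m) := by
  rw [ramc, sum_filter, sum_filter]
  refine sum_Icc_one_eq_sum_range _ ?_
  rcases eq_or_ne m 0 with rfl | hm
  · simp
  have hperiod : Complex.exp (2 * Real.pi * Complex.I * m * n / m) = 1 := by
    rw [show 2 * Real.pi * Complex.I * m * n / m = n * (2 * Real.pi * Complex.I) by field_simp]
    exact Complex.exp_nat_mul_two_pi_mul_I n
  simp [hperiod]

theorem Nat.sum_filter_range_gcd_eq {M : Type*} [AddCommMonoid M] (f : ℕ → M) {n d : ℕ}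
    (hd : d ∣ n) :
    ∑ j ∈ range n with j.gcd n = d, f j =
      ∑ a ∈ range (n / d) with a.gcd (n / d) = 1, f (d * a) := by
  rcases hd with ⟨m, rfl⟩
  rcases eq_or_ne d 0 with rfl | hd
  · simp
  have hdpos := Nat.pos_of_ne_zero hd
  have hgcd (a : ℕ) : (d * a).gcd (d * m) = d ↔ a.gcd m = 1 := by
    rw [Nat.gcd_mul_left, mul_eq_left₀ hd]
  have hdvd {j : ℕ} (hj : j.gcd (d * m) = d) : d ∣ j := hj ▸ Nat.gcd_dvd_left j (d * m)
  rw [Nat.mul_div_cancel_left m hdpos]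
  symm
  refine sum_nbij' (d * ·) (· / d) ?_ ?_ (fun a _ => Nat.mul_div_cancel_left a hdpos)
    (fun j hj => Nat.mul_div_cancel' (hdvd (mem_filter.1 hj).2)) fun _ _ => rfl
  · intro a ha
    simp only [mem_filter, mem_range, hgcd] at ha ⊢
    exact ⟨Nat.mul_lt_mul_of_pos_left ha.1 hdpos, ha.2⟩
  · intro j hj
    simp only [mem_filter, mem_range] at hj ⊢
    obtain ⟨b, rfl⟩ := hdvd hj.2
    rw [Nat.mul_div_cancel_left b hdpos, ← hgcd]
    exact ⟨Nat.lt_of_mul_lt_mul_left hj.1, hj.2⟩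

theorem Nat.sum_range_eq_sum_divisors {M : Type*} [AddCommMonoid M] (f : ℕ → M) (n : ℕ) :
    ∑ j ∈ range n, f j =
      ∑ d ∈ n.divisors, ∑ a ∈ range (n / d) with a.gcd (n / d) = 1, f (d * a) := by
  rw [← sum_fiberwise_of_maps_to (g := (·.gcd n)) (t := n.divisors)]
  · exact sum_congr rfl fun d hd => Nat.sum_filter_range_gcd_eq f (dvd_of_mem_divisors hd)
  · intro j hj
    exact mem_divisors.2 ⟨Nat.gcd_dvd_right _ _, (Nat.zero_lt_of_lt (mem_range.1 hj)).ne'⟩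

theorem neck_eq_sum_range (t : ℂ) (n k : ℕ) :
    neck t n k = 1 / k * ∑ j ∈ range k,
      Complex.exp (2 * Real.pi * Complex.I * n * j / k) * t ^ j.gcd k := by
  rw [neck, Nat.sum_range_eq_sum_divisors]
  congr 1
  refine sum_congr rfl fun d hd => ?_
  obtain ⟨m, rfl⟩ := Nat.dvd_of_mem_divisors hd
  have hd0 : d ≠ 0 := by rintro rfl; simp at hd
  rw [ramc_eq_sum_range, sum_mul, Nat.mul_div_cancel_left m (Nat.pos_of_ne_zero hd0)]
  refine sum_congr rfl fun a ha => ?_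
  rw [Nat.gcd_mul_left, (mem_filter.1 ha).2, mul_one]
  congr 2
  push_cast
  field_simp

/-- `M(t;n,k) = Z^{χ_n}_{R(C_k)}(t,…,t)`, where `C_k` is realized as
`Multiplicative (ZMod k)` acting on itself by translation (regular representation)
and `χ_n` sends the element corresponding to `j` to `e^{2πinj/k}`. -/
theorem stmt4 (n k : ℕ) [NeZero k] (t : ℂ) :
    neck t n k
      = (1 / (k : ℂ)) * ∑ g : Multiplicative (ZMod k),
          Complex.exp (2 * Real.pi * Complex.I * n * ((Multiplicative.toAdd g).val : ℂ) / k) *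
            t ^ totalCycles (Equiv.mulLeft g) := by
  rw [neck_eq_sum_range, ← ZMod.sum_val_eq_sum_range k,
    ← Multiplicative.ofAdd.sum_comp]
  simp only [totalCycles_mulLeft, ZMod.index_zpowers_ofAdd, toAdd_ofAdd]
end

section
/- For positive integers k, b and divisors l_1,...,l_s of k, the number N_k(b; l_1,...,l_s) of tuples (x_1,...,x_s) with x_i mod k, x_1 + ... + x_s ≡ b (mod k) and gcd(x_i, k) = l_i for all i, equals (1/k) Σ_{d|k} c(b,d) Π_{i=1}^s c(k/d, k/l_i), where c is the Ramanujan sum. -/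
open Finset

/-- `N_k(b; l_1,…,l_s)`: the number of tuples `(x_1,…,x_s) ∈ (ℤ/kℤ)^s` with
`x_1 + ⋯ + x_s ≡ b (mod k)` and `gcd(x_i, k) = l_i` (representatives in `1..k`;
note `gcd((x_i).val, k) = k` when `x_i ≡ 0`, matching the representative `k`). -/
noncomputable def Nk (k b s : ℕ) [NeZero k] (l : Fin s → ℕ) : ℕ :=
  Fintype.card {x : Fin s → ZMod k //
    (∑ i, x i) = (b : ZMod k) ∧ ∀ i, Nat.gcd (x i).val k = l i}

/-!
Write `e(x) = exp(2πix/k)` and, for `l ∣ k`, `S_l(t) = ∑_{gcd(x,k) = l} e(xt)` over `x mod k`.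
Detecting the congruence `x_1 + ⋯ + x_s ≡ b` with the characters `x ↦ e(tx)` gives
`k · N = ∑_{t mod k} e(-bt) ∏_i S_{l_i}(t)`. Substituting `x = l y` with `y` a unit modulo `k / l`
shows `S_l(t) = c(t, k / l)`. Since `S_l(ut) = S_l(t)` for every unit `u`, and every `t` is a unit
times `g = gcd(t, k)`, grouping the `t` by `g = k / d` leaves `∑_{gcd(t,k) = g} e(-bt) = S_g(-b)`,
which is `c(b, d)`.
-/

namespace ZMod

lemma gcd_val_dvd_gcd_val_mul {k : ℕ} (x y : ZMod k) :
    Nat.gcd x.val k ∣ Nat.gcd (x * y).val k := by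
  refine Nat.dvd_gcd ?_ (Nat.gcd_dvd_right _ _)
  rw [val_mul]
  exact (Nat.dvd_mod_iff (Nat.gcd_dvd_right _ _)).mpr ((Nat.gcd_dvd_left _ _).mul_right _)

lemma gcd_val_mul_of_isUnit {k : ℕ} (x : ZMod k) {u : ZMod k} (hu : IsUnit u) :
    Nat.gcd (x * u).val k = Nat.gcd x.val k := by
  refine Nat.dvd_antisymm ?_ (gcd_val_dvd_gcd_val_mul x u)
  simpa [mul_assoc] using gcd_val_dvd_gcd_val_mul (x * u) hu.unit⁻¹.val

lemma exists_isUnit_eq_mul_gcd_val {k : ℕ} [NeZero k] (t : ZMod k) :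
    ∃ u : ZMod k, IsUnit u ∧ t = u * (Nat.gcd t.val k : ℕ) := by
  obtain ⟨d, hd, u, hu, rfl⟩ := eq_unit_mul_divisor t
  refine ⟨u, hu, ?_⟩
  congr 2
  rw [mul_comm, gcd_val_mul_of_isUnit _ hu, val_natCast, ← Nat.gcd_rec, Nat.gcd_eq_right hd]

lemma isUnit_iff_gcd_val_eq_one {m : ℕ} [NeZero m] (y : ZMod m) :
    IsUnit y ↔ Nat.gcd y.val m = 1 := by
  conv_lhs => rw [← natCast_zmod_val y]
  exact isUnit_iff_coprime _ _

lemma stdAddChar_natCast_mul_left (l m a : ℕ) [NeZero (l * m)] [NeZero m] :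
    stdAddChar ((l * a : ℕ) : ZMod (l * m)) = stdAddChar (a : ZMod m) := by
  have hl : (l : ℂ) ≠ 0 := Nat.cast_ne_zero.mpr (left_ne_zero_of_mul (NeZero.ne (l * m)))
  have hm : (m : ℂ) ≠ 0 := NeZero.natCast_ne m ℂ
  rw [stdAddChar_apply, toCircle_natCast, stdAddChar_apply, toCircle_natCast]
  congr 1
  push_cast
  field_simp

lemma sum_Icc_one_natCast_eq_sum_univ {M : Type*} [AddCommMonoid M] (m : ℕ) [NeZero m]
    (g : ZMod m → M) : ∑ j ∈ Icc 1 m, g j = ∑ x, g x := by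
  have hinj : Set.InjOn (fun j : ℕ => (j : ZMod m)) (Icc 1 m) := by
    intro a ha b hb hab
    simp only [coe_Icc, Set.mem_Icc] at ha hb
    refine ((natCast_eq_natCast_iff _ _ _).mp hab).eq_of_abs_lt ?_
    rw [abs_sub_lt_iff]
    omega
  have himage : (Icc 1 m).image (fun j : ℕ => (j : ZMod m)) = univ := by
    refine eq_univ_of_card _ ?_
    rw [card_image_of_injOn hinj, Nat.card_Icc, ZMod.card]
    omega
  rw [← sum_image hinj, himage]

end ZMod

lemma AddChar.map_sum_eq_prod {ι A M : Type*} [AddCommMonoid A] [CommMonoid M]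
    (ψ : AddChar A M) (s : Finset ι) (f : ι → A) : ψ (∑ i ∈ s, f i) = ∏ i ∈ s, ψ (f i) :=
  map_prod ψ.toMonoidHom (fun i => Multiplicative.ofAdd (f i)) s

open ZMod

lemma ramc_eq_sum_isUnit (n m : ℕ) [NeZero m] :
    ramc n m = ∑ y ∈ univ.filter (IsUnit : ZMod m → Prop), stdAddChar (y * (n : ZMod m)) := by
  rw [ramc, sum_filter, sum_filter, ← sum_Icc_one_natCast_eq_sum_univ]
  refine sum_congr rfl fun j _ => ?_
  simp only [isUnit_iff_coprime, Nat.Coprime]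
  congr 1
  rw [← Nat.cast_mul, stdAddChar_apply, toCircle_natCast]
  push_cast
  ring_nf

noncomputable def gcdClass (k l : ℕ) [NeZero k] : Finset (ZMod k) :=
  univ.filter fun x => Nat.gcd x.val k = l

section gcdClass

variable {k : ℕ} [NeZero k]

@[simp]
lemma mem_gcdClass {l : ℕ} {x : ZMod k} : x ∈ gcdClass k l ↔ Nat.gcd x.val k = l := by
  simp [gcdClass]

lemma sum_gcdClass_mul_of_isUnit {M : Type*} [AddCommMonoid M] (l : ℕ) {u : ZMod k}
    (hu : IsUnit u) (f : ZMod k → M) :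
    ∑ x ∈ gcdClass k l, f (x * u) = ∑ x ∈ gcdClass k l, f x := by
  refine sum_nbij' (· * u) (· * hu.unit⁻¹.val) ?_ ?_ ?_ ?_ fun _ _ => rfl <;>
    simp [mul_assoc, gcd_val_mul_of_isUnit _ hu, gcd_val_mul_of_isUnit _ hu.unit⁻¹.isUnit]

lemma sum_gcdClass_stdAddChar_unit_mul (l : ℕ) (s : ZMod k) {u : ZMod k} (hu : IsUnit u) :
    ∑ x ∈ gcdClass k l, stdAddChar (x * (u * s)) = ∑ x ∈ gcdClass k l, stdAddChar (x * s) := by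
  simp_rw [← mul_assoc]
  exact sum_gcdClass_mul_of_isUnit l hu fun x => stdAddChar (x * s)

lemma sum_gcdClass_stdAddChar_mul_gcd_val (l : ℕ) (t : ZMod k) :
    ∑ x ∈ gcdClass k l, stdAddChar (x * t)
      = ∑ x ∈ gcdClass k l, stdAddChar (x * ((Nat.gcd t.val k : ℕ) : ZMod k)) := by
  obtain ⟨u, hu, ht⟩ := exists_isUnit_eq_mul_gcd_val t
  conv_lhs => rw [ht]
  exact sum_gcdClass_stdAddChar_unit_mul l _ hu

lemma sum_gcdClass_stdAddChar_eq_ramc {l : ℕ} (hl : l ∣ k) (n : ℕ) :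
    ∑ x ∈ gcdClass k l, stdAddChar (x * (n : ZMod k)) = ramc n (k / l) := by
  obtain ⟨m, rfl⟩ := hl
  have hl0 : 0 < l := Nat.pos_of_ne_zero (left_ne_zero_of_mul (NeZero.ne (l * m)))
  have : NeZero m := ⟨right_ne_zero_of_mul (NeZero.ne (l * m))⟩
  have hval (y : ZMod m) : ((l * y.val : ℕ) : ZMod (l * m)).val = l * y.val := by
    rw [val_natCast, Nat.mod_eq_of_lt (Nat.mul_lt_mul_of_pos_left (val_lt y) hl0)]
  rw [Nat.mul_div_cancel_left m hl0, ramc_eq_sum_isUnit]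
  symm
  refine sum_nbij' (fun y => ((l * y.val : ℕ) : ZMod (l * m)))
    (fun x => ((x.val / l : ℕ) : ZMod m)) ?_ ?_ ?_ ?_ ?_
  · intro y hy
    simp only [mem_filter, mem_univ, true_and, isUnit_iff_gcd_val_eq_one,
      mem_gcdClass] at hy ⊢
    rw [hval, Nat.gcd_mul_left, hy, mul_one]
  · intro x hx
    simp only [mem_filter, mem_univ, true_and, mem_gcdClass] at hx ⊢
    have := Nat.coprime_div_gcd_div_gcd (m := x.val) (n := l * m) (by rw [hx]; exact hl0)
    rwa [hx, Nat.mul_div_cancel_left _ hl0, ← isUnit_iff_coprime] at this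
  · intro y _
    simp only [hval, Nat.mul_div_cancel_left _ hl0, natCast_zmod_val]
  · intro x hx
    rw [mem_gcdClass] at hx
    have hlt : x.val / l < m := Nat.div_lt_of_lt_mul (val_lt x)
    simp only [val_natCast, Nat.mod_eq_of_lt hlt, Nat.mul_div_cancel' (hx ▸ Nat.gcd_dvd_left _ _),
      natCast_zmod_val]
  · intro y _
    rw [← Nat.cast_mul, mul_assoc, stdAddChar_natCast_mul_left, Nat.cast_mul, natCast_zmod_val]

lemma sum_eq_sum_divisors_sum_gcdClass {M : Type*} [AddCommMonoid M] (f : ZMod k → M) :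
    ∑ t, f t = ∑ g ∈ k.divisors, ∑ t ∈ gcdClass k g, f t :=
  (sum_fiberwise_of_maps_to (fun _ _ => Nat.mem_divisors.mpr
    ⟨Nat.gcd_dvd_right _ _, NeZero.ne k⟩) f).symm

end gcdClass

section Counting

variable {k : ℕ} [NeZero k]

lemma natCast_mul_card_filter_eq_sum_stdAddChar {α : Type*} (A : Finset α) (F : α → ZMod k)
    (c : ZMod k) :
    (k : ℂ) * #(A.filter fun a => F a = c)
      = ∑ t : ZMod k, ∑ a ∈ A, stdAddChar (t * (F a - c)) := by
  rw [sum_comm]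
  simp_rw [AddChar.sum_mulShift _ (isPrimitive_stdAddChar k), sub_eq_zero, ZMod.card]
  push_cast
  rw [sum_ite, sum_const_zero, add_zero, sum_const, nsmul_eq_mul, mul_comm]

lemma natCast_mul_Nk_eq_sum_stdAddChar (b s : ℕ) (l : Fin s → ℕ) :
    (k : ℂ) * Nk k b s l = ∑ t : ZMod k,
      stdAddChar (t * -(b : ZMod k)) * ∏ i, ∑ y ∈ gcdClass k (l i), stdAddChar (y * t) := by
  have hNk : Nk k b s l = #((Fintype.piFinset fun i => gcdClass k (l i)).filter
      fun x => ∑ i, x i = (b : ZMod k)) := by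
    rw [Nk, Fintype.card_subtype]
    congr 1
    ext x
    simp [and_comm]
  rw [hNk, natCast_mul_card_filter_eq_sum_stdAddChar]
  refine sum_congr rfl fun t _ => ?_
  simp_rw [mul_sub, sub_eq_add_neg, ← mul_neg, AddChar.map_add_eq_mul, mul_sum,
    AddChar.map_sum_eq_prod, ← sum_mul, prod_univ_sum, mul_comm (stdAddChar _), mul_comm t]

lemma sum_stdAddChar_mul_prod_eq_sum_divisors (b s : ℕ) (l : Fin s → ℕ) (hl : ∀ i, l i ∣ k) :
    ∑ t : ZMod k, stdAddChar (t * -(b : ZMod k)) * ∏ i, ∑ y ∈ gcdClass k (l i), stdAddChar (y * t)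
      = ∑ g ∈ k.divisors, ramc b (k / g) * ∏ i, ramc g (k / l i) := by
  rw [sum_eq_sum_divisors_sum_gcdClass]
  refine sum_congr rfl fun g hg => ?_
  have hprod (t : ZMod k) (ht : t ∈ gcdClass k g) :
      ∏ i, ∑ y ∈ gcdClass k (l i), stdAddChar (y * t) = ∏ i, ramc g (k / l i) := by
    refine prod_congr rfl fun i _ => ?_
    rw [sum_gcdClass_stdAddChar_mul_gcd_val, mem_gcdClass.mp ht,
      sum_gcdClass_stdAddChar_eq_ramc (hl i)]
  rw [sum_congr rfl fun t ht => congrArg _ (hprod t ht), ← sum_mul, neg_eq_neg_one_mul,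
    sum_gcdClass_stdAddChar_unit_mul _ _ isUnit_one.neg,
    sum_gcdClass_stdAddChar_eq_ramc (Nat.dvd_of_mem_divisors hg)]

end Counting

theorem stmt5_general (k b s : ℕ) [NeZero k] (l : Fin s → ℕ) (hl : ∀ i, l i ∣ k) :
    (Nk k b s l : ℂ)
      = (1 / (k : ℂ)) * ∑ d ∈ k.divisors, ramc b d * ∏ i, ramc (k / d) (k / l i) := by
  rw [one_div, eq_inv_mul_iff_mul_eq₀ (NeZero.natCast_ne k ℂ), natCast_mul_Nk_eq_sum_stdAddChar,
    sum_stdAddChar_mul_prod_eq_sum_divisors b s l hl, ← Nat.sum_div_divisors]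
  refine sum_congr rfl fun g hg => ?_
  rw [Nat.div_div_self (Nat.dvd_of_mem_divisors hg) (NeZero.ne k)]

theorem stmt5 (k b s : ℕ) [NeZero k] (hb : 0 < b) (l : Fin s → ℕ) (hl : ∀ i, l i ∣ k) :
    (Nk k b s l : ℂ)
      = (1 / (k : ℂ)) * ∑ d ∈ k.divisors, ramc b d * ∏ i, ramc (k / d) (k / l i) :=
  stmt5_general k b s l hl
end
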